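/- Let J : ℝ → ℝ be continuous, bounded, nonnegative, even, with J(0) > 0 and ∫_ℝ J = 1, and suppose there exist ς₁, ς₂ > 0 and M > 0 such that ς₁|x|^{−2} ≤ J(x) ≤ ς₂|x|^{−2} for |x| ≥ M. Then there exist constants c₁, c₂ > 0 and h₀ > 1 such that for all h ≥ h₀, c₁ ln h ≤ ∫₀^h ∫_h^∞ J(x − y) dy dx ≤ c₂ ln h. -/

import Mathlib

open Set MeasureTheory

/-! For even `J` the inner integral is the tail `T (h - x)`, `T s = ∫_s^∞ J`, so the double
integral is `∫_0^h T`. As `0 ≤ T ≤ ∫ J = 1`, the part over `[0, M]` lies in `[0, M]`; on `[M, h]`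
the decay hypothesis gives `ς₁ / s ≤ T s ≤ ς₂ / s`, which integrate to `ς_i log (h / M)`, and
`log (h / M)` is comparable to `log h` for large `h`. -/

theorem setIntegral_Ioi_comp_sub_right {E : Type*} [NormedAddCommGroup E] [NormedSpace ℝ E]
    (f : ℝ → E) (a x : ℝ) : ∫ y in Ioi a, f (y - x) = ∫ t in Ioi (a - x), f t := by
  have hpre : (· - x) ⁻¹' Ioi (a - x) = Ioi a := by ext; simp
  rw [← hpre, (measurePreserving_sub_right volume x).setIntegral_preimage_emb
    (measurableEmbedding_subRight x)]

theorem integral_Ioi_rpow_neg_two {s : ℝ} (hs : 0 < s) : ∫ t in Ioi s, t ^ (-2 : ℝ) = s⁻¹ := by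
  rw [integral_Ioi_rpow_of_lt (by norm_num) hs]
  norm_num [Real.rpow_neg_one]

theorem setIntegral_Ioi_le_div_of_le_rpow_neg_two {f : ℝ → ℝ} {c s : ℝ} (hs : 0 < s)
    (hf : IntegrableOn f (Ioi s)) (hle : ∀ t ∈ Ioi s, f t ≤ c * t ^ (-2 : ℝ)) :
    ∫ t in Ioi s, f t ≤ c / s := by
  calc ∫ t in Ioi s, f t ≤ ∫ t in Ioi s, c * t ^ (-2 : ℝ) :=
        setIntegral_mono_on hf ((integrableOn_Ioi_rpow_of_lt (by norm_num) hs).const_mul c)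
          measurableSet_Ioi hle
    _ = c / s := by rw [integral_const_mul, integral_Ioi_rpow_neg_two hs, div_eq_mul_inv]

theorem div_le_setIntegral_Ioi_of_rpow_neg_two_le {f : ℝ → ℝ} {c s : ℝ} (hs : 0 < s)
    (hf : IntegrableOn f (Ioi s)) (hle : ∀ t ∈ Ioi s, c * t ^ (-2 : ℝ) ≤ f t) :
    c / s ≤ ∫ t in Ioi s, f t := by
  calc c / s = ∫ t in Ioi s, c * t ^ (-2 : ℝ) := by
        rw [integral_const_mul, integral_Ioi_rpow_neg_two hs, div_eq_mul_inv]
    _ ≤ ∫ t in Ioi s, f t :=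
        setIntegral_mono_on ((integrableOn_Ioi_rpow_of_lt (by norm_num) hs).const_mul c) hf
          measurableSet_Ioi hle

theorem intervalIntegrable_const_mul_inv {a b : ℝ} (c : ℝ) (ha : 0 < a) (hab : a ≤ b) :
    IntervalIntegrable (fun s => c * s⁻¹) volume a b :=
  (intervalIntegrable_inv_iff.2 (.inr (notMem_uIcc_of_lt ha (ha.trans_le hab)))).const_mul c

theorem mul_log_div_le_intervalIntegral {f : ℝ → ℝ} {a b c : ℝ} (ha : 0 < a) (hab : a ≤ b)
    (hf : IntervalIntegrable f volume a b) (hle : ∀ s ∈ Icc a b, c / s ≤ f s) :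
    c * Real.log (b / a) ≤ ∫ s in a..b, f s := by
  rw [← integral_inv_of_pos ha (ha.trans_le hab), ← intervalIntegral.integral_const_mul]
  exact intervalIntegral.integral_mono_on hab (intervalIntegrable_const_mul_inv c ha hab) hf hle

theorem intervalIntegral_le_mul_log_div {f : ℝ → ℝ} {a b c : ℝ} (ha : 0 < a) (hab : a ≤ b)
    (hf : IntervalIntegrable f volume a b) (hle : ∀ s ∈ Icc a b, f s ≤ c / s) :
    ∫ s in a..b, f s ≤ c * Real.log (b / a) := by
  rw [← integral_inv_of_pos ha (ha.trans_le hab), ← intervalIntegral.integral_const_mul]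
  exact intervalIntegral.integral_mono_on hab hf (intervalIntegrable_const_mul_inv c ha hab) hle

theorem exists_mul_log_le_and_le_mul_log {I : ℝ → ℝ} {a b C M : ℝ} (ha : 0 < a) (hM : 0 < M)
    (hI : ∀ h ≥ M, a * Real.log (h / M) ≤ I h ∧ I h ≤ b * Real.log (h / M) + C) :
    ∃ c₁ > 0, ∃ c₂ > 0, ∃ h₀ > 1, ∀ h ≥ h₀, c₁ * Real.log h ≤ I h ∧ I h ≤ c₂ * Real.log h := by
  refine ⟨a / 2, by positivity, 2 * |b| + |C| + 1, by positivity,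
    Real.exp (1 + 2 * |Real.log M|), Real.one_lt_exp_iff.2 (by positivity), fun h hh => ?_⟩
  have h0 : 0 < h := (Real.exp_pos _).trans_le hh
  have hL : 1 + 2 * |Real.log M| ≤ Real.log h := (Real.le_log_iff_exp_le h0).2 hh
  have hm := abs_nonneg (Real.log M)
  have hMh : M ≤ h := by
    rw [← Real.log_le_log_iff hM h0]
    linarith [le_abs_self (Real.log M)]
  obtain ⟨hlow, hup⟩ := hI h hMh
  rw [Real.log_div h0.ne' hM.ne'] at hlow hup
  have hmL : |Real.log h - Real.log M| ≤ 2 * Real.log h :=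
    abs_le.2 ⟨by linarith [le_abs_self (Real.log M)], by linarith [neg_abs_le (Real.log M)]⟩
  constructor
  · have hhalf : Real.log h / 2 ≤ Real.log h - Real.log M := by
      linarith [le_abs_self (Real.log M)]
    nlinarith [mul_le_mul_of_nonneg_left hhalf ha.le]
  · have hb : b * (Real.log h - Real.log M) ≤ |b| * (2 * Real.log h) :=
      (le_abs_self _).trans (abs_mul b _ ▸ by gcongr)
    have hC : C ≤ |C| * Real.log h :=
      (le_abs_self C).trans (le_mul_of_one_le_right (abs_nonneg C) (by linarith))
    linarith

noncomputable def tailIntegral (J : ℝ → ℝ) (s : ℝ) : ℝ := ∫ t in Ioi s, J t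

section TailIntegral

variable {J : ℝ → ℝ}

theorem tailIntegral_nonneg (hJ : ∀ x, 0 ≤ J x) (s : ℝ) : 0 ≤ tailIntegral J s :=
  setIntegral_nonneg measurableSet_Ioi fun t _ => hJ t

theorem tailIntegral_le_integral (hJ : ∀ x, 0 ≤ J x) (hint : Integrable J) (s : ℝ) :
    tailIntegral J s ≤ ∫ x, J x :=
  setIntegral_le_integral hint (.of_forall hJ)

theorem antitone_tailIntegral (hJ : ∀ x, 0 ≤ J x) (hint : Integrable J) :
    Antitone (tailIntegral J) :=
  fun _ _ hab => setIntegral_mono_set hint.integrableOn (.of_forall hJ)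
    (Ioi_subset_Ioi hab).eventuallyLE

theorem integral_Ioi_comp_sub_eq_tailIntegral (hJeven : ∀ x, J (-x) = J x) (h x : ℝ) :
    ∫ y in Ioi h, J (x - y) = tailIntegral J (h - x) := by
  simp_rw [← hJeven (x - _), neg_sub]
  exact setIntegral_Ioi_comp_sub_right J h x

theorem integral_Ioc_Ioi_comp_sub_eq_integral_tailIntegral (hJeven : ∀ x, J (-x) = J x)
    {h : ℝ} (hh : 0 ≤ h) :
    ∫ x in Ioc 0 h, ∫ y in Ioi h, J (x - y) = ∫ s in 0..h, tailIntegral J s := by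
  simp_rw [integral_Ioi_comp_sub_eq_tailIntegral hJeven, ← intervalIntegral.integral_of_le hh,
    intervalIntegral.integral_comp_sub_left (tailIntegral J), sub_self, sub_zero]

end TailIntegral

theorem double_integral_critical_decay_estimate_general
    (J : ℝ → ℝ) (ς₁ ς₂ M : ℝ)
    (hJpos : ∀ x, 0 ≤ J x) (hJeven : ∀ x, J (-x) = J x)
    (hJint : ∫ x, J x = 1)
    (hς₁ : 0 < ς₁) (hM : 0 < M)
    (hdecay : ∀ x : ℝ, M ≤ |x| → ς₁ * |x| ^ (-2 : ℝ) ≤ J x ∧ J x ≤ ς₂ * |x| ^ (-2 : ℝ)) :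
    ∃ c₁ > 0, ∃ c₂ > 0, ∃ h₀ > 1, ∀ h ≥ h₀,
      c₁ * Real.log h ≤ (∫ x in Ioc (0:ℝ) h, ∫ y in Ioi h, J (x - y)) ∧
      (∫ x in Ioc (0:ℝ) h, ∫ y in Ioi h, J (x - y)) ≤ c₂ * Real.log h := by
  have hint : Integrable J := .of_integral_ne_zero (by simp [hJint])
  have hii : ∀ a b, IntervalIntegrable (tailIntegral J) volume a b := fun _ _ =>
    (antitone_tailIntegral hJpos hint).intervalIntegrable
  have hdecay_pos : ∀ s, M ≤ s → ∀ t ∈ Ioi s,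
      ς₁ * t ^ (-2 : ℝ) ≤ J t ∧ J t ≤ ς₂ * t ^ (-2 : ℝ) := fun s hs t ht => by
    simpa [abs_of_pos (hM.trans_le (hs.trans ht.le))] using
      hdecay t (hs.trans (ht.le.trans (le_abs_self t)))
  refine exists_mul_log_le_and_le_mul_log (b := ς₂) (C := M) hς₁ hM fun h hMh => ?_
  rw [integral_Ioc_Ioi_comp_sub_eq_integral_tailIntegral hJeven (hM.le.trans hMh),
    ← intervalIntegral.integral_add_adjacent_intervals (hii 0 M) (hii M h)]
  have hhead : 0 ≤ ∫ s in 0..M, tailIntegral J s ∧ ∫ s in 0..M, tailIntegral J s ≤ M := by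
    refine ⟨intervalIntegral.integral_nonneg hM.le fun s _ => tailIntegral_nonneg hJpos s, ?_⟩
    simpa [hJint] using intervalIntegral.integral_mono_on hM.le (hii _ _)
      intervalIntegrable_const fun s _ => tailIntegral_le_integral hJpos hint s
  have hlow := mul_log_div_le_intervalIntegral hM hMh (hii _ _) fun s hs =>
    div_le_setIntegral_Ioi_of_rpow_neg_two_le (hM.trans_le hs.1) hint.integrableOn
      fun t ht => (hdecay_pos s hs.1 t ht).1
  have hup := intervalIntegral_le_mul_log_div hM hMh (hii _ _) fun s hs =>
    setIntegral_Ioi_le_div_of_le_rpow_neg_two (hM.trans_le hs.1) hint.integrableOn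
      fun t ht => (hdecay_pos s hs.1 t ht).2
  constructor <;> linarith [hhead.1, hhead.2]

theorem double_integral_critical_decay_estimate
    (J : ℝ → ℝ) (ς₁ ς₂ M : ℝ)
    (hJc : Continuous J) (hJbdd : ∃ C, ∀ x, J x ≤ C)
    (hJpos : ∀ x, 0 ≤ J x) (hJeven : ∀ x, J (-x) = J x)
    (hJ0 : 0 < J 0) (hJint : ∫ x, J x = 1)
    (hς₁ : 0 < ς₁) (hς₂ : 0 < ς₂) (hM : 0 < M)
    (hdecay : ∀ x : ℝ, M ≤ |x| → ς₁ * |x| ^ (-2 : ℝ) ≤ J x ∧ J x ≤ ς₂ * |x| ^ (-2 : ℝ)) :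
    ∃ c₁ > 0, ∃ c₂ > 0, ∃ h₀ > 1, ∀ h ≥ h₀,
      c₁ * Real.log h ≤ (∫ x in Ioc (0:ℝ) h, ∫ y in Ioi h, J (x - y)) ∧
      (∫ x in Ioc (0:ℝ) h, ∫ y in Ioi h, J (x - y)) ≤ c₂ * Real.log h :=
  double_integral_critical_decay_estimate_general J ς₁ ς₂ M hJpos hJeven hJint hς₁ hM hdecay
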